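/- Let ν > 1 be real and a₀ > 0. Define S₂(n) = Σ_{k=0}^{n} w(k)·w(n−k), where w(0) = a₀ and w(k) = k^{−ν} for k ≥ 1. Then for all n ≥ 2, S₂(n) ≥ (a₀ + 1)·n^{−ν}. -/

import Mathlib

/-- Weighted power-law sequence: `w 0 = a₀`, `w k = k^(-ν)` for `k ≥ 1`. -/
noncomputable def plw (a₀ ν : ℝ) (k : ℕ) : ℝ :=
  if k = 0 then a₀ else (k : ℝ) ^ (-ν)

/-- `S₂ n`: the self-convolution of `plw a₀ ν`. -/
noncomputable def S2 (a₀ ν : ℝ) (n : ℕ) : ℝ :=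
  ∑ k ∈ Finset.range (n + 1), plw a₀ ν k * plw a₀ ν (n - k)

/-! All terms of `S₂(n)` are nonnegative, so it is at least its `k = 0` and `k = 1` terms,
`a₀ n^{-ν} + (n-1)^{-ν}`, and `(n-1)^{-ν} ≥ n^{-ν}` since `k ↦ k^{-ν}` is antitone. -/

section PowerLawWeight

variable {a₀ ν : ℝ}

@[simp]
lemma plw_zero : plw a₀ ν 0 = a₀ := if_pos rfl

@[simp]
lemma plw_one : plw a₀ ν 1 = 1 := by
  simp [plw]

lemma plw_of_ne_zero {k : ℕ} (hk : k ≠ 0) : plw a₀ ν k = (k : ℝ) ^ (-ν) := if_neg hk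

lemma plw_nonneg (ha : 0 ≤ a₀) (k : ℕ) : 0 ≤ plw a₀ ν k := by
  unfold plw
  split_ifs
  · exact ha
  · positivity

lemma plw_le_plw_of_le (hν : 0 ≤ ν) {j k : ℕ} (hj : j ≠ 0) (hjk : j ≤ k) :
    plw a₀ ν k ≤ plw a₀ ν j := by
  rw [plw_of_ne_zero hj, plw_of_ne_zero (by omega)]
  exact Real.rpow_le_rpow_of_nonpos (by positivity) (by exact_mod_cast hjk) (by linarith)

lemma plw_mul_add_plw_mul_le_S2 (ha : 0 ≤ a₀) {n i j : ℕ} (hij : i ≠ j) (hi : i ≤ n)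
    (hj : j ≤ n) :
    plw a₀ ν i * plw a₀ ν (n - i) + plw a₀ ν j * plw a₀ ν (n - j) ≤ S2 a₀ ν n := by
  rw [← Finset.sum_pair (f := fun k ↦ plw a₀ ν k * plw a₀ ν (n - k)) hij]
  refine Finset.sum_le_sum_of_subset_of_nonneg ?_ fun k _ _ ↦
    mul_nonneg (plw_nonneg ha k) (plw_nonneg ha (n - k))
  intro k hk
  simp only [Finset.mem_insert, Finset.mem_singleton] at hk
  rcases hk with rfl | rfl <;> simpa [Finset.mem_range, Nat.lt_succ_iff]

end PowerLawWeight

theorem S2_lower_bound (ν a₀ : ℝ) (hν : 1 < ν) (ha : 0 < a₀) :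
    ∀ n : ℕ, 2 ≤ n → (a₀ + 1) * (n : ℝ) ^ (-ν) ≤ S2 a₀ ν n := by
  intro n hn
  have hmono : plw a₀ ν n ≤ plw a₀ ν (n - 1) :=
    plw_le_plw_of_le (by linarith) (by omega) (Nat.sub_le n 1)
  calc (a₀ + 1) * (n : ℝ) ^ (-ν) = plw a₀ ν 0 * plw a₀ ν n + plw a₀ ν n := by
        rw [plw_zero, plw_of_ne_zero (by omega)]; ring
    _ ≤ plw a₀ ν 0 * plw a₀ ν (n - 0) + plw a₀ ν 1 * plw a₀ ν (n - 1) := by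
        rw [plw_one, one_mul, Nat.sub_zero]; linarith
    _ ≤ S2 a₀ ν n := plw_mul_add_plw_mul_le_S2 ha.le zero_ne_one (Nat.zero_le n) (by omega)
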